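/- Let d ≥ 1, k ∈ ℤ^d, t > 0, y ∈ (0,∞)^d and φ ∈ ℝ. For m ∈ ℤ and u ∈ ℝ set B_m(u) = ∫_0^{2π} e^{i(mθ + u·cos θ)} dθ. Then the series on the right-hand side converges absolutely and ∫_{[0,2π]^d} exp( i·( t·y_1⋯y_d·cos(θ_1+⋯+θ_d+φ) + Σ_{l=1}^d ( k_l θ_l + t·y_l^{−1}·cos θ_l ) ) ) dθ = (1/2π) Σ_{m∈ℤ} e^{imφ} · B_m(t·y_1⋯y_d) · ∏_{l=1}^d B_{k_l+m}(t / y_l). -/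

import Mathlib

open scoped Real

/-- Bessel's integral `B_m(u) = ∫_0^{2π} e^{i(mθ + u·cos θ)} dθ`. -/
noncomputable def circInt (m : ℤ) (u : ℝ) : ℂ :=
  ∫ θ in (0 : ℝ)..(2 * π),
    Complex.exp (Complex.I * ((((m : ℝ) * θ + u * Real.cos θ) : ℝ) : ℂ))

open Complex MeasureTheory

noncomputable def eFun (c : ℝ) (j : ℤ) : ℝ → ℂ := fun x =>
  Complex.exp (Complex.I * ((((j : ℝ) * x + c * Real.cos x) : ℝ) : ℂ))

lemma norm_circInt_le (m : ℤ) (u : ℝ) : ‖circInt m u‖ ≤ 2 * π := by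
  have h := intervalIntegral.norm_integral_le_of_norm_le_const (C := 1) (a := (0:ℝ)) (b := 2*π)
    (f := fun θ : ℝ => Complex.exp (Complex.I * ((((m : ℝ) * θ + u * Real.cos θ) : ℝ) : ℂ)))
    (fun x _ => le_of_eq (by rw [Complex.norm_exp]; simp))
  rw [circInt]
  simpa [_root_.abs_of_nonneg Real.two_pi_pos.le] using h

lemma circInt_neg (m : ℤ) (u : ℝ) : circInt (-m) u = circInt m u := by
  unfold circInt
  have h := intervalIntegral.integral_comp_sub_left (a := (0:ℝ)) (b := 2*π)
      (fun θ : ℝ => Complex.exp (Complex.I * (((((-m : ℤ) : ℝ)) * θ + u * Real.cos θ : ℝ) : ℂ))) (2*π)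
  simp only [sub_self, sub_zero] at h
  rw [← h]
  refine intervalIntegral.integral_congr fun x _ => ?_
  have hcos : Real.cos (2*π - x) = Real.cos x := by
    rw [Real.cos_sub]; simp
  rw [hcos]
  have : Complex.I * ((((-m : ℤ) : ℝ) * (2*π - x) + u * Real.cos x : ℝ) : ℂ)
      = Complex.I * ((((m : ℝ)) * x + u * Real.cos x : ℝ) : ℂ) + (-m : ℤ) * (2 * π * Complex.I) := by
    push_cast
    ring
  rw [this, Complex.exp_add, Complex.exp_int_mul_two_pi_mul_I, mul_one]

noncomputable def gA (u : ℝ) : ℝ → ℂ := fun x => Complex.exp (Complex.I * ((u * Real.cos x : ℝ) : ℂ))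
noncomputable def wA (u : ℝ) : ℝ → ℂ := fun x => Complex.I * ((u * -Real.sin x : ℝ) : ℂ)
noncomputable def w2A (u : ℝ) : ℝ → ℂ := fun x => Complex.I * ((u * -Real.cos x : ℝ) : ℂ)
noncomputable def g1A (u : ℝ) : ℝ → ℂ := fun x => gA u x * wA u x
noncomputable def g2A (u : ℝ) : ℝ → ℂ := fun x => g1A u x * wA u x + gA u x * w2A u x

lemma cont_gA (u : ℝ) : Continuous (gA u) := by unfold gA; fun_prop
lemma cont_wA (u : ℝ) : Continuous (wA u) := by unfold wA; fun_prop
lemma cont_w2A (u : ℝ) : Continuous (w2A u) := by unfold w2A; fun_prop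
lemma cont_g1A (u : ℝ) : Continuous (g1A u) := (cont_gA u).mul (cont_wA u)
lemma cont_g2A (u : ℝ) : Continuous (g2A u) :=
  ((cont_g1A u).mul (cont_wA u)).add ((cont_gA u).mul (cont_w2A u))

lemma hasDerivAt_gA (u x : ℝ) : HasDerivAt (gA u) (g1A u x) x := by
  have h1 : HasDerivAt (fun y : ℝ => u * Real.cos y) (u * -Real.sin x) x :=
    (Real.hasDerivAt_cos x).const_mul u
  have h2 := (h1.ofReal_comp).const_mul Complex.I
  exact h2.cexp

lemma hasDerivAt_g1A (u x : ℝ) : HasDerivAt (g1A u) (g2A u x) x := by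
  have h1 : HasDerivAt (fun y : ℝ => u * -Real.sin y) (u * -Real.cos x) x :=
    ((Real.hasDerivAt_sin x).neg).const_mul u
  have hw : HasDerivAt (wA u) (w2A u x) x := (h1.ofReal_comp).const_mul Complex.I
  exact (hasDerivAt_gA u x).mul hw

lemma norm_gA (u x : ℝ) : ‖gA u x‖ = 1 := by
  rw [gA, Complex.norm_exp]
  simp

lemma norm_g2A_le (u x : ℝ) : ‖g2A u x‖ ≤ u^2 + |u| := by
  have hw : ‖wA u x‖ ≤ |u| := by
    rw [wA, norm_mul, Complex.norm_I, one_mul, Complex.norm_real,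
      Real.norm_eq_abs, abs_mul, abs_neg]
    have := abs_le.mpr ⟨Real.neg_one_le_sin x, Real.sin_le_one x⟩
    calc |u| * |Real.sin x| ≤ |u| * 1 := mul_le_mul_of_nonneg_left this (abs_nonneg u)
      _ = |u| := mul_one _
  have hw2 : ‖w2A u x‖ ≤ |u| := by
    rw [w2A, norm_mul, Complex.norm_I, one_mul, Complex.norm_real,
      Real.norm_eq_abs, abs_mul, abs_neg]
    have := abs_le.mpr ⟨Real.neg_one_le_cos x, Real.cos_le_one x⟩
    calc |u| * |Real.cos x| ≤ |u| * 1 := mul_le_mul_of_nonneg_left this (abs_nonneg u)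
      _ = |u| := mul_one _
  calc ‖g2A u x‖ ≤ ‖g1A u x * wA u x‖ + ‖gA u x * w2A u x‖ := norm_add_le _ _
    _ = ‖gA u x‖ * ‖wA u x‖ * ‖wA u x‖ + ‖gA u x‖ * ‖w2A u x‖ := by
        rw [g1A]; simp only [norm_mul]
    _ ≤ 1 * |u| * |u| + 1 * |u| := by
        rw [norm_gA]
        gcongr
    _ = |u| * |u| + |u| := by ring
    _ = u^2 + |u| := by rw [← _root_.sq_abs u]; ring

lemma norm_fourierCoeffOn_le {f : ℝ → ℂ} {C : ℝ}
    (hf : ∀ x, ‖f x‖ ≤ C) (n : ℤ) :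
    ‖fourierCoeffOn Real.two_pi_pos f n‖ ≤ C := by
  have hC : 0 ≤ C := le_trans (norm_nonneg _) (hf 0)
  rw [fourierCoeffOn_eq_integral, norm_smul]
  have h1 : ‖(1 / (2*π - 0) : ℝ)‖ = 1 / (2*π) := by
    rw [Real.norm_eq_abs, _root_.abs_of_nonneg (by rw [sub_zero]; positivity)]
    norm_num
  have h2 : ‖∫ x in (0:ℝ)..(2*π), (fourier (-n) (x : AddCircle (2*π - 0)) : ℂ) • f x‖
      ≤ C * |2*π - 0| := by
    apply intervalIntegral.norm_integral_le_of_norm_le_const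
    intro x _
    rw [norm_smul]
    have : ‖(fourier (-n) (x : AddCircle (2*π - 0)) : ℂ)‖ = 1 := Circle.norm_coe _
    rw [this, one_mul]
    exact hf x
  calc ‖(1 / (2*π - 0) : ℝ)‖ * ‖∫ x in (0:ℝ)..(2*π), (fourier (-n) (x : AddCircle (2*π - 0)) : ℂ) • f x‖
      ≤ (1 / (2*π)) * (C * |2*π - 0|) := by
        rw [h1]; exact mul_le_mul_of_nonneg_left h2 (by positivity)
    _ = C := by
        rw [sub_zero, _root_.abs_of_nonneg Real.two_pi_pos.le]
        field_simp

lemma coeffOn_step {n : ℤ} (hn : n ≠ 0) (f f' : ℝ → ℂ)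
    (hder : ∀ x, HasDerivAt f (f' x) x) (hf'c : Continuous f') (hfper : f (2*π) = f 0) :
    fourierCoeffOn Real.two_pi_pos f n
      = (Complex.I * n)⁻¹ * fourierCoeffOn Real.two_pi_pos f' n := by
  rw [fourierCoeffOn_of_hasDerivAt Real.two_pi_pos hn (fun x _ => hder x)
    (hf'c.intervalIntegrable _ _)]
  rw [hfper, sub_self, mul_zero, zero_sub]
  have hπ : (π:ℂ) ≠ 0 := Complex.ofReal_ne_zero.mpr Real.pi_ne_zero
  have hn' : (n:ℂ) ≠ 0 := Int.cast_ne_zero.mpr hn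
  have hI : Complex.I ≠ 0 := Complex.I_ne_zero
  push_cast
  field_simp
  ring

lemma norm_coeffOn_gA_le (u : ℝ) {n : ℤ} (hn : n ≠ 0) :
    ‖fourierCoeffOn Real.two_pi_pos (gA u) n‖ ≤ (u^2 + |u|) * (1 / (n:ℝ)^2) := by
  have hper : gA u (2*π) = gA u 0 := by unfold gA; rw [Real.cos_two_pi, Real.cos_zero]
  have hper1 : g1A u (2*π) = g1A u 0 := by
    unfold g1A wA
    rw [Real.sin_two_pi, Real.sin_zero]
    rw [hper]
  have h1 := coeffOn_step hn (gA u) (g1A u) (hasDerivAt_gA u) (cont_g1A u) hper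
  have h2 := coeffOn_step hn (g1A u) (g2A u) (hasDerivAt_g1A u) (cont_g2A u) hper1
  rw [h1, h2]
  have hbound := norm_fourierCoeffOn_le (f := g2A u) (C := u^2 + |u|) (norm_g2A_le u) n
  have hInv : ‖(Complex.I * (n:ℂ))⁻¹‖ = 1 / |(n:ℝ)| := by
    rw [norm_inv, norm_mul]
    simp
  rw [norm_mul, norm_mul, hInv]
  calc 1 / |(n:ℝ)| * (1 / |(n:ℝ)| * ‖fourierCoeffOn Real.two_pi_pos (g2A u) n‖)
      ≤ 1 / |(n:ℝ)| * (1 / |(n:ℝ)| * (u^2 + |u|)) := by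
        gcongr
    _ = (u^2 + |u|) * (1 / (n:ℝ)^2) := by
        rw [← _root_.sq_abs (n:ℝ)]
        ring

lemma circInt_master (u : ℝ) :
    Summable (fun m : ℤ => ‖circInt m u‖) ∧
    ∀ α : ℝ, HasSum
      (fun m : ℤ => (1 / (2 * (π:ℂ))) * circInt m u *
        Complex.exp (Complex.I * (((m : ℝ) * α : ℝ) : ℂ)))
      (Complex.exp (Complex.I * ((u * Real.cos α : ℝ) : ℂ))) := by
  haveI : Fact (0 < 2 * π) := ⟨Real.two_pi_pos⟩
  have hper : Function.Periodic (gA u) (2 * π) := fun x => by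
    unfold gA; rw [Real.cos_add_two_pi]
  set F : C(AddCircle (2 * π), ℂ) := ⟨hper.lift, continuous_coinduced_dom.mpr (cont_gA u)⟩
    with hFdef
  have hFx : ∀ x : ℝ, F (x : AddCircle (2 * π)) = gA u x := fun x => hper.lift_coe x
  have hπ : (π:ℂ) ≠ 0 := Complex.ofReal_ne_zero.mpr Real.pi_ne_zero
  have hfour : ∀ (n : ℤ) (x : ℝ),
      (fourier n (x : AddCircle (2*π)) : ℂ) = Complex.exp (Complex.I * (((n:ℝ) * x : ℝ) : ℂ)) := by
    intro n x
    rw [fourier_coe_apply]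
    congr 1
    push_cast
    field_simp
  -- the Fourier coefficients of F are (1/2π) circInt n u
  have hcoeff : ∀ n : ℤ, fourierCoeff (⇑F) n = (1 / (2 * (π:ℂ))) * circInt n u := by
    intro n
    rw [fourierCoeff_eq_intervalIntegral (⇑F) n 0, zero_add, ← circInt_neg n u, circInt]
    have hcongr : (∫ x in (0:ℝ)..(2*π), (fourier (-n) (x : AddCircle (2*π)) : ℂ) • F (x : AddCircle (2*π)))
        = ∫ θ in (0:ℝ)..(2*π),
            Complex.exp (Complex.I * (((((-n : ℤ):ℝ)) * θ + u * Real.cos θ : ℝ) : ℂ)) := by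
      refine intervalIntegral.integral_congr fun x _ => ?_
      rw [smul_eq_mul, hfour, hFx]
      unfold gA
      rw [← Complex.exp_add]
      congr 1
      push_cast
      ring
    rw [hcongr, real_smul]
    push_cast
    ring
  -- relate fourierCoeff F to fourierCoeffOn gA
  have hbridge : ∀ n : ℤ, fourierCoeff (⇑F) n = fourierCoeffOn Real.two_pi_pos (gA u) n := by
    intro n
    rw [fourierCoeff_eq_intervalIntegral (⇑F) n 0, zero_add,
      fourierCoeffOn_eq_integral (gA u) n Real.two_pi_pos]
    simp only [fourier_coe_apply, sub_zero]
    congr 1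
  -- summability of norms of coefficients
  have hsumcoeff : Summable (fun n : ℤ => ‖fourierCoeff (⇑F) n‖) := by
    apply Summable.of_norm_bounded_eventually (g := fun n : ℤ => (u^2 + |u|) * (1 / (n:ℝ)^2))
    · exact (Real.summable_one_div_int_pow.mpr one_lt_two).mul_left _
    · rw [Filter.eventually_cofinite]
      apply Set.Finite.subset (Set.finite_singleton (0:ℤ))
      intro n hn
      simp only [Set.mem_setOf_eq, not_le, norm_norm] at hn
      by_contra h0
      simp only [Set.mem_singleton_iff] at h0
      have := norm_coeffOn_gA_le u h0
      rw [← hbridge] at this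
      exact absurd this (not_le.mpr hn)
  have hsum : Summable (fun m : ℤ => ‖circInt m u‖) := by
    have : (fun m : ℤ => ‖circInt m u‖) = fun m : ℤ => (2*π) * ‖fourierCoeff (⇑F) m‖ := by
      funext m
      rw [hcoeff m, norm_mul]
      have : ‖(1 / (2 * (π:ℂ)))‖ = 1 / (2*π) := by
        rw [norm_div, norm_one]
        have : (2 * (π:ℂ)) = ((2*π : ℝ) : ℂ) := by push_cast; ring
        rw [this, Complex.norm_real, Real.norm_eq_abs, _root_.abs_of_nonneg Real.two_pi_pos.le]
      rw [this]
      field_simp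
    rw [this]
    exact hsumcoeff.mul_left _
  refine ⟨hsum, fun α => ?_⟩
  have hpoint := has_pointwise_sum_fourier_series_of_summable
    (f := F) (hsumcoeff.of_norm) (α : AddCircle (2*π))
  rw [hFx α] at hpoint
  unfold gA at hpoint
  have heq : (fun m : ℤ => (1 / (2 * (π:ℂ))) * circInt m u *
      Complex.exp (Complex.I * (((m : ℝ) * α : ℝ) : ℂ)))
      = fun i : ℤ => fourierCoeff (⇑F) i • fourier i ((α : ℝ) : AddCircle (2*π)) := by
    funext m
    rw [hcoeff m, smul_eq_mul, hfour m α]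
  rw [heq]
  exact hpoint

lemma pointwise_term (d : ℕ) (k : Fin d → ℤ) (t : ℝ) (y : Fin d → ℝ) (φ : ℝ) (m : ℤ)
    (θ : Fin d → ℝ) :
    Complex.exp (Complex.I * ((((m:ℝ) * φ) : ℝ) : ℂ)) * ∏ l, eFun (t / y l) (k l + m) (θ l)
      = Complex.exp (Complex.I * ((((m:ℝ) * ((∑ l, θ l) + φ)) : ℝ) : ℂ)) *
        ∏ l, Complex.exp (Complex.I * ((((k l : ℝ) * θ l + t * (y l)⁻¹ * Real.cos (θ l)) : ℝ) : ℂ)) := by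
  simp only [eFun]
  rw [← Complex.exp_sum, ← Complex.exp_sum, ← Complex.exp_add, ← Complex.exp_add]
  congr 1
  push_cast
  simp only [mul_add, add_mul, Finset.sum_add_distrib, Finset.mul_sum]
  ring_nf

lemma pointwise_val (d : ℕ) (k : Fin d → ℤ) (t u : ℝ) (y : Fin d → ℝ) (φ : ℝ)
    (θ : Fin d → ℝ) :
    Complex.exp (Complex.I * (((u * Real.cos ((∑ l, θ l) + φ)) : ℝ) : ℂ)) *
        ∏ l, Complex.exp (Complex.I * ((((k l : ℝ) * θ l + t * (y l)⁻¹ * Real.cos (θ l)) : ℝ) : ℂ))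
      = Complex.exp (Complex.I *
          (((u * Real.cos ((∑ l, θ l) + φ) +
            ∑ l, ((k l : ℝ) * θ l + t * (y l)⁻¹ * Real.cos (θ l))) : ℝ) : ℂ)) := by
  rw [← Complex.exp_sum, ← Complex.exp_add]
  congr 1
  push_cast
  rw [mul_add, Finset.mul_sum]

lemma cont_eFun (c : ℝ) (j : ℤ) : Continuous (eFun c j) := by unfold eFun; fun_prop

lemma norm_exp_I_mul (r : ℝ) : ‖Complex.exp (Complex.I * (r : ℂ))‖ = 1 := by
  rw [Complex.norm_exp]
  simp

lemma integral_eFun (c : ℝ) (j : ℤ) :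
    ∫ x in Set.Icc (0:ℝ) (2*π), eFun c j x = circInt j c := by
  rw [MeasureTheory.integral_Icc_eq_integral_Ioc,
    ← intervalIntegral.integral_of_le Real.two_pi_pos.le]
  rfl

lemma box_integral_prod (d : ℕ) (f : Fin d → ℝ → ℂ) :
    ∫ θ in (Set.univ.pi fun _ : Fin d => Set.Icc (0 : ℝ) (2 * π)), ∏ l, f l (θ l)
      = ∏ l, ∫ x in Set.Icc (0:ℝ) (2*π), f l x := by
  have hboxmeas : MeasurableSet (Set.univ.pi fun _ : Fin d => Set.Icc (0 : ℝ) (2 * π)) :=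
    MeasurableSet.univ_pi fun _ => measurableSet_Icc
  rw [← integral_indicator hboxmeas]
  have hind : ((Set.univ.pi fun _ : Fin d => Set.Icc (0 : ℝ) (2 * π)).indicator
      fun θ => ∏ l, f l (θ l))
      = fun θ => ∏ l, (Set.Icc (0:ℝ) (2*π)).indicator (f l) (θ l) := by
    funext θ
    by_cases hθ : θ ∈ (Set.univ.pi fun _ : Fin d => Set.Icc (0 : ℝ) (2 * π))
    · rw [Set.indicator_of_mem hθ]
      exact Finset.prod_congr rfl fun l _ =>
        (Set.indicator_of_mem (Set.mem_univ_pi.mp hθ l) _).symm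
    · rw [Set.indicator_of_notMem hθ]
      obtain ⟨l, hl⟩ : ∃ l, θ l ∉ Set.Icc (0:ℝ) (2*π) := by
        by_contra hc; push_neg at hc; exact hθ (Set.mem_univ_pi.mpr hc)
      exact (Finset.prod_eq_zero (Finset.mem_univ l)
        (Set.indicator_of_notMem hl _)).symm
  rw [hind]
  refine (MeasureTheory.integral_fintype_prod_eq_prod (μ := fun _ => volume)
    (f := fun l x => (Set.Icc (0:ℝ) (2*π)).indicator (f l) x)).trans ?_
  exact Finset.prod_congr rfl fun l _ => integral_indicator measurableSet_Icc


lemma norm_one_div_two_pi : ‖(1 / (2 * (π:ℂ)))‖ = 1 / (2*π) := by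
  rw [norm_div, norm_one]
  have : (2 * (π:ℂ)) = ((2*π : ℝ) : ℂ) := by push_cast; ring
  rw [this, Complex.norm_real, Real.norm_eq_abs, _root_.abs_of_nonneg Real.two_pi_pos.le]

theorem stmt_16 (d : ℕ) (hd : 1 ≤ d) (k : Fin d → ℤ) (t : ℝ) (ht : 0 < t)
    (y : Fin d → ℝ) (hy : ∀ l, 0 < y l) (φ : ℝ) :
    Summable (fun m : ℤ =>
        ‖(Complex.exp (Complex.I * ((((m : ℝ) * φ) : ℝ) : ℂ)) *
          circInt m (t * ∏ l, y l) * ∏ l, circInt (k l + m) (t / y l))‖) ∧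
      (∫ θ in (Set.univ.pi fun _ : Fin d => Set.Icc (0 : ℝ) (2 * π)),
          Complex.exp (Complex.I *
            (((t * (∏ l, y l) * Real.cos ((∑ l, θ l) + φ) +
                ∑ l, ((k l : ℝ) * θ l + t * (y l)⁻¹ * Real.cos (θ l))) : ℝ) : ℂ)))
        = (1 / (2 * (π : ℂ))) * ∑' m : ℤ,
            Complex.exp (Complex.I * ((((m : ℝ) * φ) : ℝ) : ℂ)) *
              circInt m (t * ∏ l, y l) * ∏ l, circInt (k l + m) (t / y l) := by
  classical
  set u : ℝ := t * ∏ l, y l with hu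
  obtain ⟨hsum0, hJA⟩ := circInt_master u
  set box : Set (Fin d → ℝ) := Set.univ.pi fun _ : Fin d => Set.Icc (0 : ℝ) (2 * π) with hbox
  have hboxmeas : MeasurableSet box := MeasurableSet.univ_pi fun _ => measurableSet_Icc
  have hboxcompact : IsCompact box := isCompact_univ_pi fun _ => isCompact_Icc
  -- summability with the factor (2π)^d
  have habs : ∀ m : ℤ,
      ‖Complex.exp (Complex.I * ((((m : ℝ) * φ) : ℝ) : ℂ)) *
        circInt m u * ∏ l, circInt (k l + m) (t / y l)‖ ≤ ‖circInt m u‖ * (2*π)^d := by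
    intro m
    rw [norm_mul, norm_mul, norm_exp_I_mul, one_mul]
    have h1 : ‖∏ l, circInt (k l + m) (t / y l)‖ ≤ (2*π)^d := by
      rw [norm_prod]
      calc ∏ l, ‖circInt (k l + m) (t / y l)‖ ≤ ∏ _l : Fin d, (2*π) :=
            Finset.prod_le_prod (fun l _ => norm_nonneg _) (fun l _ => norm_circInt_le _ _)
        _ = (2*π)^d := by rw [Finset.prod_const, Finset.card_univ, Fintype.card_fin]
    exact mul_le_mul_of_nonneg_left h1 (norm_nonneg _)
  have hsummable : Summable (fun m : ℤ =>
      ‖(Complex.exp (Complex.I * ((((m : ℝ) * φ) : ℝ) : ℂ)) *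
        circInt m u * ∏ l, circInt (k l + m) (t / y l))‖) := by
    exact Summable.of_nonneg_of_le (fun m => norm_nonneg _) habs (hsum0.mul_right _)
  refine ⟨hsummable, ?_⟩
  -- pointwise expansion of the integrand
  have hpt : ∀ θ : Fin d → ℝ, HasSum
      (fun m : ℤ => (1 / (2 * (π:ℂ))) * circInt m u *
        Complex.exp (Complex.I * ((((m:ℝ) * φ) : ℝ) : ℂ)) * ∏ l, eFun (t / y l) (k l + m) (θ l))
      (Complex.exp (Complex.I *
        (((u * Real.cos ((∑ l, θ l) + φ) +
            ∑ l, ((k l : ℝ) * θ l + t * (y l)⁻¹ * Real.cos (θ l))) : ℝ) : ℂ))) := by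
    intro θ
    have h0 := (hJA ((∑ l, θ l) + φ)).mul_right
      (∏ l, Complex.exp (Complex.I * ((((k l : ℝ) * θ l + t * (y l)⁻¹ * Real.cos (θ l)) : ℝ) : ℂ)))
    rw [pointwise_val d k t u y φ θ] at h0
    refine HasSum.congr_fun h0 fun m => ?_
    rw [mul_assoc, mul_assoc, pointwise_term d k t y φ m θ]
    ring
  -- each summand is integrable on the box with constant norm
  have hcont : ∀ m : ℤ, Continuous (fun θ : Fin d → ℝ =>
      (1 / (2 * (π:ℂ))) * circInt m u * Complex.exp (Complex.I * ((((m:ℝ) * φ) : ℝ) : ℂ)) *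
        ∏ l, eFun (t / y l) (k l + m) (θ l)) := by
    intro m
    refine continuous_const.mul (continuous_finset_prod _ fun l _ => ?_)
    exact (cont_eFun _ _).comp (continuous_apply l)
  have hnormval : ∀ (m : ℤ) (θ : Fin d → ℝ),
      ‖(1 / (2 * (π:ℂ))) * circInt m u * Complex.exp (Complex.I * ((((m:ℝ) * φ) : ℝ) : ℂ)) *
        ∏ l, eFun (t / y l) (k l + m) (θ l)‖ = (1/(2*π)) * ‖circInt m u‖ := by
    intro m θ
    rw [norm_mul, norm_mul, norm_mul, norm_exp_I_mul, norm_one_div_two_pi, norm_prod]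
    have : ∀ l : Fin d, ‖eFun (t / y l) (k l + m) (θ l)‖ = 1 := fun l => by
      unfold eFun; exact norm_exp_I_mul _
    simp [this]
  have hint : ∀ m : ℤ, Integrable (fun θ : Fin d → ℝ =>
      (1 / (2 * (π:ℂ))) * circInt m u * Complex.exp (Complex.I * ((((m:ℝ) * φ) : ℝ) : ℂ)) *
        ∏ l, eFun (t / y l) (k l + m) (θ l)) (volume.restrict box) :=
    fun m => ((hcont m).continuousOn).integrableOn_compact hboxcompact
  have hintnorm : Summable (fun m : ℤ => ∫ θ in box,
      ‖(1 / (2 * (π:ℂ))) * circInt m u * Complex.exp (Complex.I * ((((m:ℝ) * φ) : ℝ) : ℂ)) *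
        ∏ l, eFun (t / y l) (k l + m) (θ l)‖) := by
    have : ∀ m : ℤ, (∫ θ in box,
        ‖(1 / (2 * (π:ℂ))) * circInt m u * Complex.exp (Complex.I * ((((m:ℝ) * φ) : ℝ) : ℂ)) *
          ∏ l, eFun (t / y l) (k l + m) (θ l)‖)
        = (volume box).toReal * ((1/(2*π)) * ‖circInt m u‖) := by
      intro m
      rw [integral_congr_ae (Filter.EventuallyEq.of_eq (funext fun θ => hnormval m θ)),
        setIntegral_const, smul_eq_mul, measureReal_def]
    rw [funext this]
    exact (hsum0.mul_left _).mul_left _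
  have hHasSum := hasSum_integral_of_summable_integral_norm (μ := volume.restrict box)
    hint hintnorm
  have hval : (∫ θ in box, ∑' m : ℤ,
      (1 / (2 * (π:ℂ))) * circInt m u * Complex.exp (Complex.I * ((((m:ℝ) * φ) : ℝ) : ℂ)) *
        ∏ l, eFun (t / y l) (k l + m) (θ l))
      = ∫ θ in box, Complex.exp (Complex.I *
          (((u * Real.cos ((∑ l, θ l) + φ) +
              ∑ l, ((k l : ℝ) * θ l + t * (y l)⁻¹ * Real.cos (θ l))) : ℝ) : ℂ)) :=
    integral_congr_ae (Filter.EventuallyEq.of_eq (funext fun θ => (hpt θ).tsum_eq))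
  rw [hval] at hHasSum
  rw [← hHasSum.tsum_eq]
  -- evaluate each box integral
  have hIbox : ∀ m : ℤ, (∫ θ in box,
      (1 / (2 * (π:ℂ))) * circInt m u * Complex.exp (Complex.I * ((((m:ℝ) * φ) : ℝ) : ℂ)) *
        ∏ l, eFun (t / y l) (k l + m) (θ l))
      = (1 / (2 * (π:ℂ))) * (Complex.exp (Complex.I * ((((m:ℝ) * φ) : ℝ) : ℂ)) *
          circInt m u * ∏ l, circInt (k l + m) (t / y l)) := by
    intro m
    rw [MeasureTheory.integral_const_mul]
    rw [hbox, box_integral_prod d (fun l => eFun (t / y l) (k l + m))]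
    rw [funext fun l => integral_eFun (t / y l) (k l + m)]
    ring
  rw [funext hIbox, tsum_mul_left]
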